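/- arXiv:2106.14751 — 2 statements merged into one kernel-verified Lean document; each statement's English description precedes it below -/
import Mathlib

section
/- For every integer n ≥ 1 and every x, x^n = ((-1)^(n-1)/(n-1)!) · Σ_{k=1}^{n} bel_k(x) · S₂(n,k), as an identity of polynomials in x over ℚ. -/
open PowerSeries Finset

noncomputable section

/-- Composition of formal power series (the standard composition when the inner
series `f` has zero constant term, since then `coeff n (f ^ k) = 0` for `k > n`). -/
def pcomp {R : Type*} [CommRing R] (g f : PowerSeries R) : PowerSeries R :=
  PowerSeries.mk fun n =>
    ∑ k ∈ Finset.range (n + 1), PowerSeries.coeff k g * PowerSeries.coeff n (f ^ k)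

/-- The formal power series `log(1+t)` over `ℚ`. -/
def Lq : PowerSeries ℚ := PowerSeries.mk fun n => if n = 0 then 0 else (-1) ^ (n + 1) / n

/-- The formal power series `-log(1-t)` over `ℚ`. -/
def Labs : PowerSeries ℚ := PowerSeries.mk fun n => if n = 0 then 0 else 1 / n

/-- Signed Stirling numbers of the first kind: `(log(1+t))^k / k! = Σ S₁(n,k) tⁿ/n!`. -/
def S1 (n k : ℕ) : ℚ := n.factorial / k.factorial * PowerSeries.coeff n (Lq ^ k)

/-- Unsigned Stirling numbers of the first kind: `(-log(1-t))^k / k! = Σ |s(n,k)| tⁿ/n!`. -/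
def uS1 (n k : ℕ) : ℚ := n.factorial / k.factorial * PowerSeries.coeff n (Labs ^ k)

/-- Stirling numbers of the second kind: `(eᵗ-1)^k / k! = Σ S₂(n,k) tⁿ/n!`. -/
def S2 (n k : ℕ) : ℚ :=
  n.factorial / k.factorial * PowerSeries.coeff n ((PowerSeries.exp ℚ - 1) ^ k)

/-- `λ^(n-1) * (1)_{n,1/λ} = ∏_{j=1}^{n-1} (λ - j)`. -/
def dc (l : ℚ) (n : ℕ) : ℚ := ∏ j ∈ Finset.Ico 1 n, (l - j)

/-- Degenerate falling factorial `(1)_{n,λ} = ∏_{j=0}^{n-1} (1 - jλ)`. -/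
def ffac (l : ℚ) (n : ℕ) : ℚ := ∏ j ∈ Finset.range n, (1 - j * l)

/-- Degenerate logarithm `log_λ(1+t) = Σ_{n≥1} λ^{n-1}(1)_{n,1/λ} tⁿ/n!`. -/
def Ld (l : ℚ) : PowerSeries ℚ :=
  PowerSeries.mk fun n => if n = 0 then 0 else dc l n / n.factorial

/-- Degenerate exponential `e_λ(t) = Σ_{n≥0} (1)_{n,λ} tⁿ/n!`. -/
def Ed (l : ℚ) : PowerSeries ℚ := PowerSeries.mk fun n => ffac l n / n.factorial

/-- Degenerate Stirling numbers of the first kind. -/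
def S1d (l : ℚ) (n k : ℕ) : ℚ :=
  n.factorial / k.factorial * PowerSeries.coeff n (Ld l ^ k)

/-- Degenerate Stirling numbers of the second kind. -/
def S2d (l : ℚ) (n k : ℕ) : ℚ :=
  n.factorial / k.factorial * PowerSeries.coeff n ((Ed l - 1) ^ k)

/-- Bell numbers of the second kind: `log(1 + log(1+t)) = Σ_{n≥1} bel_n tⁿ/n!`. -/
def belNum (n : ℕ) : ℚ := n.factorial * PowerSeries.coeff n (pcomp Lq Lq)

/-- Bell numbers of the second kind via the explicit formula. -/
def belN (m : ℕ) : ℚ :=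
  ∑ k ∈ Finset.Icc 1 m, (-1) ^ (k - 1) * (k - 1).factorial * S1 m k

/-- Bell polynomials of the second kind. -/
def belPoly (n : ℕ) : Polynomial ℚ :=
  ∑ k ∈ Finset.Icc 1 n,
    Polynomial.C ((-1) ^ (k - 1) * (k - 1).factorial * S1 n k) * Polynomial.X ^ k

/-- Bell polynomials of the second kind evaluated at `x : ℚ`. -/
def belVal (x : ℚ) (m : ℕ) : ℚ :=
  ∑ k ∈ Finset.Icc 1 m, (-1) ^ (k - 1) * (k - 1).factorial * S1 m k * x ^ k

/-- Degenerate Bell numbers of the second kind via generating function. -/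
def belNumD (l : ℚ) (n : ℕ) : ℚ := n.factorial * PowerSeries.coeff n (pcomp (Ld l) (Ld l))

/-- Degenerate Bell numbers of the second kind via the explicit formula. -/
def belND (l : ℚ) (m : ℕ) : ℚ := ∑ j ∈ Finset.Icc 1 m, dc l j * S1d l m j

/-- Degenerate Bell polynomials of the second kind. -/
def belPolyD (l : ℚ) (n : ℕ) : Polynomial ℚ :=
  ∑ k ∈ Finset.Icc 1 n, Polynomial.C (dc l k * S1d l n k) * Polynomial.X ^ k

/-- `log(1+t)` as a power series over `ℚ[x]`. -/
def LqP : PowerSeries (Polynomial ℚ) :=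
  PowerSeries.mk fun n => if n = 0 then 0 else Polynomial.C ((-1) ^ (n + 1) / n : ℚ)

/-- `-log(1-t)` as a power series over `ℚ[x]`. -/
def LabsP : PowerSeries (Polynomial ℚ) :=
  PowerSeries.mk fun n => if n = 0 then 0 else Polynomial.C (1 / n : ℚ)

/-- `log(1-t)` as a power series over `ℚ[x]`. -/
def MP : PowerSeries (Polynomial ℚ) :=
  PowerSeries.mk fun n => if n = 0 then 0 else Polynomial.C (-(1 / n) : ℚ)

/-- `log_λ(1+t)` as a power series over `ℚ[x]`. -/
def LdP (l : ℚ) : PowerSeries (Polynomial ℚ) :=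
  PowerSeries.mk fun n => if n = 0 then 0 else Polynomial.C (dc l n / n.factorial)

/-- The polylogarithm `Li_k(y) = Σ_{m≥1} yᵐ/mᵏ` as a power series over `ℚ[x]`. -/
def LiP (k : ℤ) : PowerSeries (Polynomial ℚ) :=
  PowerSeries.mk fun m => if m = 0 then 0 else Polynomial.C (((m : ℚ) ^ k)⁻¹)

/-- The degenerate polylogarithm `Li_{k,λ}` as a power series over `ℚ[x]`. -/
def LidP (l : ℚ) (k : ℤ) : PowerSeries (Polynomial ℚ) :=
  PowerSeries.mk fun m => if m = 0 then 0 else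
    Polynomial.C ((-1) ^ (m - 1) * dc l m / ((m - 1).factorial * (m : ℚ) ^ k))

/-- `-x · log(1-t)` over `ℚ[x]`. -/
def innerP : PowerSeries (Polynomial ℚ) := PowerSeries.C (Polynomial.X : Polynomial ℚ) * LabsP

/-- `-x · log_λ(1-t)` over `ℚ[x]`. -/
def innerD (l : ℚ) : PowerSeries (Polynomial ℚ) :=
  PowerSeries.C (Polynomial.X : Polynomial ℚ) *
    PowerSeries.mk fun n => if n = 0 then 0 else
      Polynomial.C ((-1) ^ (n + 1) * dc l n / n.factorial)

/-- Poly-Bell polynomials of the second kind via generating function. -/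
def polyBellP (k : ℤ) (n : ℕ) : Polynomial ℚ :=
  (n.factorial : ℚ) • PowerSeries.coeff n (pcomp (LiP k) innerP)

/-- Poly-Bell polynomials of the second kind via the explicit formula. -/
def belPk (k : ℤ) (n : ℕ) : Polynomial ℚ :=
  ∑ l ∈ Finset.Icc 1 n,
    Polynomial.C ((((l : ℚ) ^ (k - 1))⁻¹) * (l - 1).factorial * uS1 n l) * Polynomial.X ^ l

/-- Degenerate poly-Bell polynomials of the second kind via generating function. -/
def belDPk (l : ℚ) (k : ℤ) (n : ℕ) : Polynomial ℚ :=
  (n.factorial : ℚ) • PowerSeries.coeff n (pcomp (LidP l k) (innerD l))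

/-- Degenerate poly-Bell polynomials of the second kind via the explicit formula. -/
def belE (l : ℚ) (k : ℤ) (m : ℕ) : Polynomial ℚ :=
  (-1 : Polynomial ℚ) ^ (m - 1) *
    ∑ j ∈ Finset.Icc 1 m,
      Polynomial.C ((((j : ℚ) ^ (k - 1))⁻¹) * dc l j * S1d l m j) * Polynomial.X ^ j

/-! Since `log (1 + (eᵗ - 1)) = t`, the matrices `(S₂(n,k))` and `(S₁(k,j))` are inverse to each
other. Writing `bel_k(x) = Σⱼ (-1)^(j-1) (j-1)! S₁(k,j) xʲ` and summing against `S₂(n,k)`, the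
inversion kills every power of `x` except `xⁿ`, whose coefficient is `(-1)^(n-1) (n-1)!`. -/

namespace PowerSeries

theorem coeff_pow_eq_zero_of_lt {R : Type*} [CommSemiring R] {f : R⟦X⟧}
    (hf : constantCoeff f = 0) {n k : ℕ} (h : n < k) : coeff n (f ^ k) = 0 :=
  coeff_of_lt_order n <| (Nat.cast_lt.mpr h).trans_le (le_order_pow_of_constantCoeff_eq_zero k hf)

variable {A : Type*} [CommRing A] [Algebra ℚ A]

theorem one_add_X_mul_derivative_log : (1 + X) * d⁄dX A (log A) = 1 := by
  ext n
  rcases n with _ | n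
  · simp [deriv_log]
  · simp [deriv_log, add_mul, coeff_succ_X_mul, pow_succ]

theorem constantCoeff_exp_sub_one : constantCoeff (exp A - 1) = 0 := by
  simp [constantCoeff_exp]

/-- Both sides vanish at `0`, and by the chain rule and `(1 + X) * log' = 1` the left side has
derivative `1`. -/
theorem log_subst_exp_sub_one : (log A).subst (exp A - 1) = X := by
  have : IsAddTorsionFree A := .of_module_rat A
  have hE := HasSubst.of_constantCoeff_zero' (constantCoeff_exp_sub_one (A := A))
  refine derivative.ext ?_ ?_
  · have h := congrArg (substAlgHom hE) (one_add_X_mul_derivative_log (A := A))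
    rw [map_mul, map_add, map_one, substAlgHom_X, coe_substAlgHom, add_sub_cancel] at h
    rw [derivative_subst hE, map_sub, derivative_exp, derivative_one, sub_zero, derivative_X,
      mul_comm, h]
  · rw [constantCoeff_X]
    exact constantCoeff_subst_eq_zero constantCoeff_exp_sub_one _ constantCoeff_log

theorem coeff_subst_eq_sum_range {R : Type*} [CommRing R] {b : R⟦X⟧}
    (hb : constantCoeff b = 0) (f : R⟦X⟧) (n : ℕ) :
    coeff n (f.subst b) = ∑ k ∈ Finset.range (n + 1), coeff k f * coeff n (b ^ k) := by
  rw [coeff_subst' (HasSubst.of_constantCoeff_zero' hb)]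
  refine finsum_eq_sum_of_support_subset _ fun k hk => ?_
  rw [Finset.mem_coe, Finset.mem_range]
  by_contra! h
  exact hk (by simp [coeff_pow_eq_zero_of_lt hb (Nat.lt_of_succ_le h)])

end PowerSeries

theorem Lq_eq_log : Lq = PowerSeries.log ℚ := by
  ext n
  simp [Lq]

theorem S1_eq_zero_of_lt {k m : ℕ} (h : k < m) : S1 k m = 0 := by
  rw [S1, Lq_eq_log, coeff_pow_eq_zero_of_lt constantCoeff_log h, mul_zero]

theorem S1_zero_right {k : ℕ} (hk : k ≠ 0) : S1 k 0 = 0 := by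
  simp [S1, coeff_one, hk]

theorem S2_zero_right {n : ℕ} (hn : n ≠ 0) : S2 n 0 = 0 := by
  simp [S2, coeff_one, hn]

/-- Compare the coefficients of `tⁿ` in `(log (1 + (eᵗ - 1)))ʲ = tʲ`. -/
theorem sum_S2_mul_S1 (n j : ℕ) :
    ∑ k ∈ range (n + 1), S2 n k * S1 k j = if n = j then 1 else 0 := by
  have hE : constantCoeff (exp ℚ - 1) = 0 := constantCoeff_exp_sub_one
  have h := congrArg (coeff n) (subst_pow (HasSubst.of_constantCoeff_zero' hE) (log ℚ) j)
  rw [log_subst_exp_sub_one, coeff_X_pow, coeff_subst_eq_sum_range hE] at h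
  have hj : (j.factorial : ℚ) ≠ 0 := by positivity
  calc ∑ k ∈ range (n + 1), S2 n k * S1 k j
      = n.factorial / j.factorial *
          ∑ k ∈ range (n + 1), coeff k (log ℚ ^ j) * coeff n ((exp ℚ - 1) ^ k) := by
        rw [mul_sum]
        refine sum_congr rfl fun k _ => ?_
        have hk : (k.factorial : ℚ) ≠ 0 := by positivity
        rw [S2, S1, Lq_eq_log]
        field_simp
    _ = if n = j then 1 else 0 := by
        rw [h]
        split_ifs with hnj
        · subst hnj
          simp [hj]
        · simp

theorem coeff_belPoly {k : ℕ} (hk : k ≠ 0) (m : ℕ) :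
    (belPoly k).coeff m = (-1) ^ (m - 1) * (m - 1).factorial * S1 k m := by
  simp only [belPoly, Polynomial.finsetSum_coeff, Polynomial.coeff_C_mul_X_pow]
  rw [sum_ite_eq]
  split_ifs with hm
  · rfl
  · rcases Nat.eq_zero_or_pos m with rfl | hm0
    · simp [S1_zero_right hk]
    · rw [S1_eq_zero_of_lt (by simp at hm; omega), mul_zero]

theorem sum_Icc_S1_mul_S2 {n : ℕ} (hn : n ≠ 0) (m : ℕ) :
    ∑ k ∈ Icc 1 n, S1 k m * S2 n k = if n = m then 1 else 0 := by
  rw [← sum_S2_mul_S1, range_eq_Ico, sum_eq_sum_Ico_succ_bot n.succ_pos, S2_zero_right hn,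
    zero_mul, zero_add]
  exact sum_congr rfl fun k _ => mul_comm _ _

theorem stmt4 (n : ℕ) (hn : 1 ≤ n) :
    (Polynomial.X : Polynomial ℚ) ^ n =
      Polynomial.C ((-1 : ℚ) ^ (n - 1) / (n - 1).factorial) *
        ∑ k ∈ Finset.Icc 1 n, belPoly k * Polynomial.C (S2 n k) := by
  ext m
  have hcoeff : ∀ k ∈ Icc 1 n, (belPoly k * Polynomial.C (S2 n k)).coeff m =
      (-1) ^ (m - 1) * (m - 1).factorial * (S1 k m * S2 n k) := fun k hk => by
    rw [Polynomial.coeff_mul_C, coeff_belPoly (by simp at hk; omega), mul_assoc]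
  rw [Polynomial.coeff_C_mul, Polynomial.finsetSum_coeff, sum_congr rfl hcoeff, ← mul_sum,
    sum_Icc_S1_mul_S2 (by omega), Polynomial.coeff_X_pow]
  rcases eq_or_ne m n with rfl | hmn
  · have hf : ((m - 1).factorial : ℚ) ≠ 0 := by positivity
    field_simp
    rw [← pow_mul, mul_comm, pow_mul, neg_one_sq, one_pow]
  · simp [hmn, hmn.symm]

end
end

section
/- For every integer n ≥ 1 and parameter λ, the degenerate Bell number of the second kind satisfies bel_{n,λ} = Σ_{k=1}^{n} λ^(k-1) (1)_{k,1/λ} S_{1,λ}(n,k). -/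
open PowerSeries Finset

noncomputable section

theorem coeff_pcomp_of_constantCoeff_eq_zero {R : Type*} [CommRing R] {g : PowerSeries R}
    (hg : constantCoeff g = 0) (f : PowerSeries R) (n : ℕ) :
    coeff n (pcomp g f) = ∑ k ∈ Icc 1 n, coeff k g * coeff n (f ^ k) := by
  rw [pcomp, coeff_mk, range_eq_Ico, sum_eq_sum_Ico_succ_bot (Nat.zero_lt_succ n), zero_add,
    Nat.succ_eq_add_one, Ico_add_one_right_eq_Icc, coeff_zero_eq_constantCoeff_apply, hg, zero_mul,
    zero_add]

theorem constantCoeff_Ld (l : ℚ) : constantCoeff (Ld l) = 0 := by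
  rw [← coeff_zero_eq_constantCoeff_apply, Ld, coeff_mk, if_pos rfl]

theorem coeff_Ld {l : ℚ} {k : ℕ} (hk : k ≠ 0) : coeff k (Ld l) = dc l k / k.factorial := by
  rw [Ld, coeff_mk, if_neg hk]

theorem stmt8_general (l : ℚ) (n : ℕ) :
    belNumD l n = ∑ k ∈ Finset.Icc 1 n, dc l k * S1d l n k := by
  rw [belNumD, coeff_pcomp_of_constantCoeff_eq_zero (constantCoeff_Ld l), mul_sum]
  refine sum_congr rfl fun k hk => ?_
  rw [coeff_Ld (Nat.one_le_iff_ne_zero.1 (mem_Icc.1 hk).1), S1d]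
  ring

theorem stmt8 (l : ℚ) (n : ℕ) (hn : 1 ≤ n) :
    belNumD l n = ∑ k ∈ Finset.Icc 1 n, dc l k * S1d l n k :=
  stmt8_general l n

end
end
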